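/- Let n ≥ 2 and let λ₁ ≤ λ₂ ≤ ... ≤ λₙ be nonnegative real numbers with R = λ₁ + ... + λₙ. Then (n-1)·Σᵢ λᵢ² + n·R·λ₁ - n(n-1)·λ₁² - R² ≥ 0. -/
import Mathlib

theorem stmt_1 (n : ℕ) (hn : 2 ≤ n) (lam : Fin n → ℝ) (hmono : Monotone lam)
    (hnonneg : ∀ i, 0 ≤ lam i) (R : ℝ) (hR : R = ∑ i, lam i) :
    0 ≤ (n - 1 : ℝ) * (∑ i, (lam i) ^ 2) + n * R * lam ⟨0, by omega⟩
      - n * (n - 1) * (lam ⟨0, by omega⟩) ^ 2 - R ^ 2 := by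
  set i0 : Fin n := ⟨0, by omega⟩ with hi0
  set μ : Fin n → ℝ := fun i => lam i - lam i0 with hμdef
  have hμ : ∀ i, 0 ≤ μ i := fun i => sub_nonneg.2 (hmono (by exact Fin.le_def.mpr (Nat.zero_le _)))
  set S : ℝ := ∑ i, μ i with hSdef
  set Q : ℝ := ∑ i, (μ i) ^ 2 with hQdef
  have hcard : (Finset.univ.erase i0).card = n - 1 := by
    rw [Finset.card_erase_of_mem (Finset.mem_univ _)]; simp
  have hμ0 : μ i0 = 0 := by simp [hμdef]
  -- Cauchy–Schwarz on the erased set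
  have hS' : S = ∑ i ∈ Finset.univ.erase i0, μ i := by
    rw [hSdef, ← Finset.sum_erase _ (by rw [hμ0])]
  have hQ' : ∑ i ∈ Finset.univ.erase i0, (μ i) ^ 2 ≤ Q := by
    rw [hQdef]
    exact Finset.sum_le_sum_of_subset_of_nonneg (Finset.subset_univ _)
      (fun i _ _ => sq_nonneg _)
  have hCS : S ^ 2 ≤ (n - 1 : ℝ) * Q := by
    rw [hS']
    calc (∑ i ∈ Finset.univ.erase i0, μ i) ^ 2
        ≤ (Finset.univ.erase i0).card * ∑ i ∈ Finset.univ.erase i0, (μ i) ^ 2 :=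
          sq_sum_le_card_mul_sum_sq
      _ ≤ (n - 1 : ℝ) * Q := by
          rw [hcard]
          have h1 : ((n - 1 : ℕ) : ℝ) = (n : ℝ) - 1 := by
            have : (1 : ℕ) ≤ n := by omega
            push_cast [Nat.cast_sub this]; ring
          rw [h1]
          exact mul_le_mul_of_nonneg_left hQ' (by
            have : (2 : ℝ) ≤ n := by exact_mod_cast hn
            linarith)
  have hSR : R = S + n * lam i0 := by
    rw [hR, hSdef]
    rw [Finset.sum_sub_distrib, Finset.sum_const, Finset.card_univ, Fintype.card_fin,
      nsmul_eq_mul]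
    ring
  have hQR : ∑ i, (lam i) ^ 2 = Q + 2 * lam i0 * S + n * (lam i0) ^ 2 := by
    rw [hQdef, hSdef]
    have : ∀ i, (lam i) ^ 2 = (μ i) ^ 2 + 2 * lam i0 * μ i + (lam i0) ^ 2 := by
      intro i; simp [hμdef]; ring
    rw [Finset.sum_congr rfl (fun i _ => this i), Finset.sum_add_distrib,
      Finset.sum_add_distrib, ← Finset.mul_sum, Finset.sum_const, Finset.card_univ,
      Fintype.card_fin, nsmul_eq_mul]
  have hSnn : 0 ≤ S := Finset.sum_nonneg fun i _ => hμ i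
  have hl0 : 0 ≤ lam i0 := hnonneg i0
  have hn2 : (2 : ℝ) ≤ n := by exact_mod_cast hn
  rw [hSR, hQR]
  nlinarith [mul_nonneg hl0 hSnn, hCS]
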